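/- In the EWL quantum game of a 2×2 game G where the two payoff functions P₁ and P₂ have no common maximizer on {C,D}×{C,D}, there is no pure-strategy Nash equilibrium: for every pair of unit quaternions (p,q), some player can strictly improve their EWL payoff by deviating. -/

import Mathlib

open Quaternion

inductive Strat | C | D
deriving DecidableEq

instance : Fintype Strat :=
  ⟨{Strat.C, Strat.D}, fun x => by cases x <;> simp⟩

open Strat

/-- The EWL payoff for a player with classical payoff function `P`. -/
noncomputable def ewlPayoff (P : Strat → Strat → ℝ) (p q : Quaternion ℝ) : ℝ :=
  (p * q).re ^ 2 * P C C + (p * q).imI ^ 2 * P C D +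
    (p * q).imJ ^ 2 * P D C + (p * q).imK ^ 2 * P D D

/-!
If neither player can improve at `(p, q)`, then, since `p' ↦ p' q` and `q' ↦ p q'` are onto the
unit sphere, each player's payoff `∑ₛ wₛ Pᵢ(s)` is at least every pure payoff `Pᵢ(s)`, the weights
`wₛ` being the squared coordinates of the unit quaternion `p q`. Some weight is positive, and an
outcome of positive weight in a convex combination dominating all its terms is a maximum; so that
outcome maximizes both `P₁` and `P₂`.
-/

theorem le_of_forall_le_sum_mul_of_pos {ι : Type*} [Fintype ι] {w x : ι → ℝ}
    (hw : ∀ i, 0 ≤ w i) (hsum : ∑ i, w i = 1) (hle : ∀ j, x j ≤ ∑ i, w i * x i)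
    {i : ι} (hi : 0 < w i) (j : ι) : x j ≤ x i := by
  set e := ∑ i, w i * x i
  have hzero : ∑ k, w k * (e - x k) = 0 := by
    simp only [mul_sub, Finset.sum_sub_distrib, ← Finset.sum_mul, hsum, one_mul, e, sub_self]
  have hterm := (Finset.sum_eq_zero_iff_of_nonneg fun k _ => mul_nonneg (hw k)
    (sub_nonneg.2 (hle k))).1 hzero i (Finset.mem_univ i)
  have hxi : x i = e := by
    linarith [(mul_eq_zero.1 hterm).resolve_left hi.ne']
  exact hxi ▸ hle j

namespace Strat

def amplitude (r : Quaternion ℝ) : Strat × Strat → ℝ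
  | (C, C) => r.re
  | (C, D) => r.imI
  | (D, C) => r.imJ
  | (D, D) => r.imK

def basisQuat : Strat × Strat → Quaternion ℝ
  | (C, C) => ⟨1, 0, 0, 0⟩
  | (C, D) => ⟨0, 1, 0, 0⟩
  | (D, C) => ⟨0, 0, 1, 0⟩
  | (D, D) => ⟨0, 0, 0, 1⟩

theorem sum_univ_prod (f : Strat × Strat → ℝ) :
    ∑ s, f s = f (C, C) + f (C, D) + f (D, C) + f (D, D) := by
  have huniv : (Finset.univ : Finset Strat) = {C, D} := rfl
  have hCD : C ≠ D := by decide
  rw [Fintype.sum_prod_type, huniv, Finset.sum_pair hCD, Finset.sum_pair hCD,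
    Finset.sum_pair hCD]
  ring

theorem sum_amplitude_sq (r : Quaternion ℝ) : ∑ s, amplitude r s ^ 2 = normSq r := by
  rw [sum_univ_prod, normSq_def']
  rfl

theorem exists_amplitude_ne_zero {r : Quaternion ℝ} (hr : ‖r‖ = 1) :
    ∃ s, amplitude r s ^ 2 ≠ 0 := by
  by_contra! h
  have : normSq r = 1 := by rw [normSq_eq_norm_mul_self, hr, one_mul]
  simp [← sum_amplitude_sq, h] at this

theorem amplitude_basisQuat (s t : Strat × Strat) :
    amplitude (basisQuat s) t = if s = t then 1 else 0 := by
  rcases s with ⟨_ | _, _ | _⟩ <;> rcases t with ⟨_ | _, _ | _⟩ <;> rfl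

theorem norm_basisQuat (s : Strat × Strat) : ‖basisQuat s‖ = 1 := by
  have h : ‖basisQuat s‖ ^ 2 = 1 := by
    rw [sq, ← normSq_eq_norm_mul_self, ← sum_amplitude_sq]
    simp [amplitude_basisQuat]
  exact (pow_eq_one_iff_of_nonneg (norm_nonneg _) two_ne_zero).1 h

end Strat

open Strat

theorem ewlPayoff_eq_sum (P : Strat → Strat → ℝ) (p q : Quaternion ℝ) :
    ewlPayoff P p q = ∑ s, amplitude (p * q) s ^ 2 * P s.1 s.2 := by
  rw [sum_univ_prod]
  rfl

theorem ewlPayoff_of_mul_eq_basisQuat (P : Strat → Strat → ℝ) {p q : Quaternion ℝ}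
    {s : Strat × Strat} (h : p * q = basisQuat s) : ewlPayoff P p q = P s.1 s.2 := by
  simp [ewlPayoff_eq_sum, h, amplitude_basisQuat]

theorem le_ewlPayoff_of_forall_left_le (P : Strat → Strat → ℝ) {p q : Quaternion ℝ}
    (hq : ‖q‖ = 1) (hbest : ∀ p', ‖p'‖ = 1 → ewlPayoff P p' q ≤ ewlPayoff P p q)
    (s : Strat × Strat) : P s.1 s.2 ≤ ewlPayoff P p q := by
  have hq0 : q ≠ 0 := norm_ne_zero_iff.1 (by simp [hq])
  have hdev : basisQuat s * q⁻¹ * q = basisQuat s := inv_mul_cancel_right₀ hq0 _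
  rw [← ewlPayoff_of_mul_eq_basisQuat P hdev]
  exact hbest _ (by simp [norm_basisQuat, hq])

theorem le_ewlPayoff_of_forall_right_le (P : Strat → Strat → ℝ) {p q : Quaternion ℝ}
    (hp : ‖p‖ = 1) (hbest : ∀ q', ‖q'‖ = 1 → ewlPayoff P p q' ≤ ewlPayoff P p q)
    (s : Strat × Strat) : P s.1 s.2 ≤ ewlPayoff P p q := by
  have hp0 : p ≠ 0 := norm_ne_zero_iff.1 (by simp [hp])
  have hdev : p * (p⁻¹ * basisQuat s) = basisQuat s := mul_inv_cancel_left₀ hp0 _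
  rw [← ewlPayoff_of_mul_eq_basisQuat P hdev]
  exact hbest _ (by simp [norm_basisQuat, hp])

theorem forall_le_of_forall_le_ewlPayoff {r : Quaternion ℝ} (hr : ‖r‖ = 1) {s : Strat × Strat}
    (hs : amplitude r s ^ 2 ≠ 0) (P : Strat → Strat → ℝ)
    (hle : ∀ t : Strat × Strat, P t.1 t.2 ≤ ∑ u, amplitude r u ^ 2 * P u.1 u.2)
    (t : Strat × Strat) : P t.1 t.2 ≤ P s.1 s.2 := by
  refine le_of_forall_le_sum_mul_of_pos (fun u => sq_nonneg _) ?_ hle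
    (lt_of_le_of_ne (sq_nonneg _) hs.symm) t
  rw [sum_amplitude_sq, normSq_eq_norm_mul_self, hr, one_mul]

theorem ewl_no_pure_nash (P1 P2 : Strat → Strat → ℝ)
    (hno : ¬ ∃ s : Strat × Strat,
      (∀ t : Strat × Strat, P1 t.1 t.2 ≤ P1 s.1 s.2) ∧
      (∀ t : Strat × Strat, P2 t.1 t.2 ≤ P2 s.1 s.2)) :
    ∀ p q : Quaternion ℝ, ‖p‖ = 1 → ‖q‖ = 1 →
      (∃ p' : Quaternion ℝ, ‖p'‖ = 1 ∧ ewlPayoff P1 p q < ewlPayoff P1 p' q) ∨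
      (∃ q' : Quaternion ℝ, ‖q'‖ = 1 ∧ ewlPayoff P2 p q < ewlPayoff P2 p q') := by
  intro p q hp hq
  by_contra! ⟨hbest1, hbest2⟩
  have hpq : ‖p * q‖ = 1 := by rw [norm_mul, hp, hq, one_mul]
  obtain ⟨s, hs⟩ := exists_amplitude_ne_zero hpq
  have h1 := le_ewlPayoff_of_forall_left_le P1 hq hbest1
  have h2 := le_ewlPayoff_of_forall_right_le P2 hp hbest2
  simp only [ewlPayoff_eq_sum] at h1 h2
  exact hno ⟨s, forall_le_of_forall_le_ewlPayoff hpq hs P1 h1,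
    forall_le_of_forall_le_ewlPayoff hpq hs P2 h2⟩
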